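/- Under monotonic filtering after a source switch in an arbitrary connected graph of N nodes with all values equal to 1, every partial accumulate is bounded by 2N at all times: a_i(t) ≤ 2N for i ∈ I_0(t), a_i(t) = 1 for i ∈ I_1(t), and a_i(t) ≤ N for i ∈ I_2(t). -/

import Mathlib

/-!
Let `L m` be the sum of the initial accumulates over the level `d(o, ·) = m`. In the steady
state every node of level `m + 1` is a child of a node of level `m`, so
`#(level m) + L (m + 1) ≤ L m`, and telescoping gives `#{d(o, ·) < m} + L m ≤ L 0 ≤ N`.

After the switch the estimates agree with `d(z, ·)` on `I₀(t)` and with `d(o, ·)` on `I₂(t)`,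
are at least `min (d(z, ·)) t` everywhere and at most `max (d(o, ·)) (t + 1)`. Monotonic
filtering therefore leaves a node of `I₁(t)` without children, lets a node of `I₂(t+1)` of old
level `m` collect only nodes of `I₂(t)` of old level `m + 1` (so the `I₂` level sums stay below
the `L m`), and lets a node of `I₀(t+1)` of new level `m` collect either nodes of new level
`m + 1` or nodes on the front `t ≤ d(z, ·)`. Front nodes lie in `I₁(t)`, with accumulate `1`
and old level `< m + 1`, or in `I₂(t)` with old level `m + 1`; so the front contributes at most
`L 0`, and induction on `t` bounds the level sums of `I₀` by `#{d(z, ·) ≥ m} + L 0 ≤ 2N`.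
-/

open Finset

namespace SimpleGraph

variable {V : Type*} {G : SimpleGraph V}

theorem Adj.dist_le_dist_add_one {i j : V} (h : G.Adj i j) (x : V) :
    G.dist x i ≤ G.dist x j + 1 := by
  simpa [dist_eq_one_iff_adj.2 h.symm] using h.symm.reachable.dist_triangle_right x

theorem exists_adj_dist_add_one_eq {x i : V} (h : G.dist x i ≠ 0) :
    ∃ j, G.Adj i j ∧ G.dist x j + 1 = G.dist x i := by
  obtain ⟨p, hp⟩ := exists_walk_of_dist_ne_zero h
  have hnil : ¬p.Nil := Walk.not_nil_iff_lt_length.2 (by omega)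
  have hadj := p.adj_penultimate hnil
  refine ⟨p.penultimate, hadj.symm, le_antisymm ?_ (hadj.symm.dist_le_dist_add_one x)⟩
  have := G.dist_le p.dropLast
  have := p.length_dropLast_add_one hnil
  omega

end SimpleGraph

theorem Finset.sum_fiberwise_and {ι κ M : Type*} [Fintype ι] [DecidableEq κ] [AddCommMonoid M]
    (S : Finset κ) (p : ι → κ) (P : κ → ι → Prop) [∀ i j, Decidable (P i j)]
    (g : ι → M) :
    ∑ i ∈ S, ∑ j with p j = i ∧ P i j, g j = ∑ j with p j ∈ S ∧ P (p j) j, g j := by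
  rw [← sum_fiberwise_of_maps_to (g := p) (t := S) fun j hj => (mem_filter.1 hj).2.1]
  refine sum_congr rfl fun i hi => sum_congr ?_ fun _ _ => rfl
  ext j
  simp only [mem_filter, mem_univ, true_and]
  constructor
  · rintro ⟨rfl, hP⟩
    exact ⟨⟨hi, hP⟩, rfl⟩
  · rintro ⟨⟨-, hP⟩, rfl⟩
    exact ⟨rfl, hP⟩

section Levels

variable {V : Type*} [Fintype V] [DecidableEq V] {ℓ : V → ℕ} {p : V → V} {b : V → ℕ}

theorem card_add_sum_level_succ_le (hp : ∀ j, ℓ j ≠ 0 → ℓ j = ℓ (p j) + 1)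
    (hb : ∀ i, b i = 1 + ∑ j with p j = i ∧ ℓ j = ℓ i + 1, b j) (m : ℕ) :
    #{j | ℓ j = m} + ∑ j with ℓ j = m + 1, b j ≤ ∑ j with ℓ j = m, b j := by
  set S : Finset V := {i | ℓ i = m}
  calc #S + ∑ j with ℓ j = m + 1, b j
      ≤ #S + ∑ j with p j ∈ S ∧ ℓ j = ℓ (p j) + 1, b j := by
        refine add_le_add_right (sum_le_sum_of_subset fun j hj => ?_) _
        simp only [S, mem_filter, mem_univ, true_and] at hj ⊢
        have := hp j (by omega)
        omega
    _ = ∑ j ∈ S, b j := by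
        rw [← sum_fiberwise_and S p (fun i j => ℓ j = ℓ i + 1), card_eq_sum_ones,
          ← sum_add_distrib]
        exact sum_congr rfl fun i _ => (hb i).symm

theorem card_lt_add_sum_level_le (hp : ∀ j, ℓ j ≠ 0 → ℓ j = ℓ (p j) + 1)
    (hb : ∀ i, b i = 1 + ∑ j with p j = i ∧ ℓ j = ℓ i + 1, b j) (m : ℕ) :
    #{j | ℓ j < m} + ∑ j with ℓ j = m, b j ≤ ∑ j with ℓ j = 0, b j := by
  induction m with
  | zero => simp
  | succ m ih =>
    have hsplit : #{j | ℓ j < m + 1} = #{j | ℓ j < m} + #{j | ℓ j = m} := by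
      rw [← card_union_of_disjoint (disjoint_filter.2 fun _ _ h => h.ne), ← filter_or]
      simp only [Nat.lt_succ_iff_lt_or_eq]
    have := card_add_sum_level_succ_le hp hb m
    omega

end Levels

/-- `d t i` is the estimate `d̂_i(t)`; the update `d̂_i(t+1) = 1 + min_j d̂_j(t)` enters only
through the last two fields. -/
structure IsSwitchedBellmanFord {V : Type*} (G : SimpleGraph V) (z o : V) (d : ℕ → V → ℕ) :
    Prop where
  init (i : V) : d 0 i = G.dist o i
  source (t : ℕ) : d (t + 1) z = 0
  le_add_one_of_adj {t : ℕ} {i j : V} : i ≠ z → G.Adj i j → d (t + 1) i ≤ d t j + 1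
  exists_adj_eq_add_one (t : ℕ) {i : V} : i ≠ z → ∃ j, G.Adj i j ∧ d (t + 1) i = d t j + 1

namespace IsSwitchedBellmanFord

variable {V : Type*} {G : SimpleGraph V} {z o : V} {d : ℕ → V → ℕ}

theorem of_neighborFinset_inf' [Fintype V] [DecidableRel G.Adj]
    (hne : ∀ i, (G.neighborFinset i).Nonempty) (hinit : ∀ i, d 0 i = G.dist o i)
    (hsrc : ∀ t, 1 ≤ t → d t z = 0)
    (hupd : ∀ t, 1 ≤ t → ∀ i, i ≠ z →
      d t i = 1 + (G.neighborFinset i).inf' (hne i) (fun j => d (t - 1) j)) :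
    IsSwitchedBellmanFord G z o d where
  init := hinit
  source t := hsrc (t + 1) t.succ_pos
  le_add_one_of_adj {t i j} hiz hij := by
    have := inf'_le (fun j => d t j) ((G.mem_neighborFinset i j).2 hij)
    rw [hupd (t + 1) t.succ_pos i hiz, Nat.add_sub_cancel]
    omega
  exists_adj_eq_add_one t i hiz := by
    obtain ⟨j, hj, hmin⟩ := exists_mem_eq_inf' (hne i) (fun j => d t j)
    refine ⟨j, (G.mem_neighborFinset i j).1 hj, ?_⟩
    rw [hupd (t + 1) t.succ_pos i hiz, Nat.add_sub_cancel, hmin, add_comm]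

theorem min_dist_le (hd : IsSwitchedBellmanFord G z o d) (t : ℕ) (i : V) :
    min (G.dist z i) t ≤ d t i := by
  induction t generalizing i with
  | zero => simp
  | succ t ih =>
    by_cases hiz : i = z
    · simp [hiz]
    obtain ⟨j, hij, hj⟩ := hd.exists_adj_eq_add_one t hiz
    have := hij.dist_le_dist_add_one z
    have := ih j
    omega

theorem eq_dist_of_dist_lt (hG : G.Connected) (hd : IsSwitchedBellmanFord G z o d) {t : ℕ}
    {i : V} (hi : G.dist z i < t) : d t i = G.dist z i := by
  suffices ∀ t i, G.dist z i < t → d t i ≤ G.dist z i by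
    have hmin := hd.min_dist_le t i
    have hle := this t i hi
    omega
  intro t
  induction t with
  | zero => simp
  | succ t ih =>
    intro i hi
    by_cases hiz : i = z
    · simp [hiz, hd.source]
    obtain ⟨j, hij, hj⟩ :=
      SimpleGraph.exists_adj_dist_add_one_eq (hG.pos_dist_of_ne (Ne.symm hiz)).ne'
    have := hd.le_add_one_of_adj (t := t) hiz hij
    have := ih j (by omega)
    omega

theorem dist_le_of_le_dist (hd : IsSwitchedBellmanFord G z o d) {t : ℕ} {i : V}
    (hi : t ≤ G.dist z i) : G.dist o i ≤ d t i := by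
  induction t generalizing i with
  | zero => simp [hd.init]
  | succ t ih =>
    have hiz : i ≠ z := by rintro rfl; simp at hi
    obtain ⟨j, hij, hj⟩ := hd.exists_adj_eq_add_one t hiz
    have := hij.dist_le_dist_add_one z
    have := hij.dist_le_dist_add_one o
    have := ih (i := j) (by omega)
    omega

theorem le_max_dist (hG : G.Connected) (hd : IsSwitchedBellmanFord G z o d) (t : ℕ) (i : V) :
    d t i ≤ max (G.dist o i) (t + 1) := by
  induction t generalizing i with
  | zero => simp [hd.init]
  | succ t ih =>
    by_cases hiz : i = z
    · simp [hiz, hd.source]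
    by_cases hio : i = o
    · obtain ⟨j, hij, hj⟩ := hd.exists_adj_eq_add_one t hiz
      have hoj := (hio ▸ hij).symm.dist_le_dist_add_one o
      have := ih j
      simp only [SimpleGraph.dist_self] at hoj
      omega
    obtain ⟨j, hij, hj⟩ :=
      SimpleGraph.exists_adj_dist_add_one_eq (hG.pos_dist_of_ne (Ne.symm hio)).ne'
    have := hd.le_add_one_of_adj (t := t) hiz hij
    have := ih j
    omega

theorem eq_dist_of_le_dist (hd : IsSwitchedBellmanFord G z o d) {t : ℕ} {i : V}
    (hzi : t ≤ G.dist z i) (hoi : t ≤ G.dist o i) : d t i = G.dist o i := by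
  induction t generalizing i with
  | zero => exact hd.init i
  | succ t ih =>
    have hiz : i ≠ z := by rintro rfl; simp at hzi
    obtain ⟨j, hij, hj⟩ :=
      SimpleGraph.exists_adj_dist_add_one_eq (G := G) (x := o) (i := i) (by omega)
    have := hd.le_add_one_of_adj (t := t) hiz hij
    have := hij.dist_le_dist_add_one z
    have := ih (i := j) (by omega) (by omega)
    have := hd.dist_le_of_le_dist hzi
    omega

end IsSwitchedBellmanFord

/-- `c t j` is the constraining node `c_j(t)`; at time `0` the pointers form a shortest-path tree
towards `o` and `a 0` are its subtree sizes. -/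
structure IsMonotonicFiltering {V : Type*} [Fintype V] [DecidableEq V] (G : SimpleGraph V)
    (o : V) (d : ℕ → V → ℕ) (c : ℕ → V → V) (a : ℕ → V → ℕ) : Prop where
  parent_eq_or_adj (t : ℕ) (j : V) : c t j = j ∨ G.Adj j (c t j)
  dist_parent_zero {j : V} : j ≠ o → G.dist o j = G.dist o (c 0 j) + 1
  accumulate_zero (i : V) :
    a 0 i = 1 + ∑ j with c 0 j = i ∧ G.dist o j = G.dist o i + 1, a 0 j
  accumulate_succ (t : ℕ) (i : V) :
    a (t + 1) i = 1 + ∑ j with c t j = i ∧ d t j = d (t + 1) i + 1, a t j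

namespace IsMonotonicFiltering

variable {V : Type*} [Fintype V] [DecidableEq V] {G : SimpleGraph V} {z o : V}
  {d : ℕ → V → ℕ} {c : ℕ → V → V} {a : ℕ → V → ℕ}

theorem dist_le_dist_parent_add_one (hf : IsMonotonicFiltering G o d c a) (t : ℕ) (x j : V) :
    G.dist x j ≤ G.dist x (c t j) + 1 := by
  rcases hf.parent_eq_or_adj t j with h | h
  · rw [h]; omega
  · exact h.dist_le_dist_add_one x

theorem dist_parent_le_dist_add_one (hf : IsMonotonicFiltering G o d c a) (t : ℕ) (x j : V) :
    G.dist x (c t j) ≤ G.dist x j + 1 := by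
  rcases hf.parent_eq_or_adj t j with h | h
  · rw [h]; omega
  · exact h.symm.dist_le_dist_add_one x

theorem card_add_sum_level_succ_le (hf : IsMonotonicFiltering G o d c a) (m : ℕ) :
    #{j | G.dist o j = m} + ∑ j with G.dist o j = m + 1, a 0 j ≤
      ∑ j with G.dist o j = m, a 0 j :=
  _root_.card_add_sum_level_succ_le (ℓ := G.dist o)
    (fun _ hj => hf.dist_parent_zero (by rintro rfl; simp at hj)) hf.accumulate_zero m

theorem card_lt_add_sum_level_le (hf : IsMonotonicFiltering G o d c a) (m : ℕ) :
    #{j | G.dist o j < m} + ∑ j with G.dist o j = m, a 0 j ≤ ∑ j with G.dist o j = 0, a 0 j :=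
  _root_.card_lt_add_sum_level_le (ℓ := G.dist o)
    (fun _ hj => hf.dist_parent_zero (by rintro rfl; simp at hj)) hf.accumulate_zero m

theorem sum_accumulate_succ_le (hf : IsMonotonicFiltering G o d c a) {t : ℕ} {S T : Finset V}
    (hST : ∀ j, c t j ∈ S → d t j = d (t + 1) (c t j) + 1 → j ∈ T) :
    ∑ i ∈ S, a (t + 1) i ≤ #S + ∑ j ∈ T, a t j := by
  rw [sum_congr rfl fun i _ => hf.accumulate_succ t i, sum_add_distrib, card_eq_sum_ones,
    sum_fiberwise_and S (c t) (fun i j => d t j = d (t + 1) i + 1)]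
  refine add_le_add_right (sum_le_sum_of_subset fun j hj => ?_) _
  simp only [mem_filter, mem_univ, true_and] at hj
  exact hST j hj.1 hj.2

theorem accumulate_eq_one (hG : G.Connected) (hd : IsSwitchedBellmanFord G z o d)
    (hf : IsMonotonicFiltering G o d c a) {t : ℕ} {i : V} (hoi : G.dist o i < t)
    (hzi : t ≤ G.dist z i) : a t i = 1 := by
  cases t with
  | zero => omega
  | succ t =>
    rw [hf.accumulate_succ, filter_false_of_mem, sum_empty, add_zero]
    rintro j - ⟨rfl, hdj⟩
    have := hd.min_dist_le (t + 1) (c t j)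
    have := hd.le_max_dist hG t j
    have := hf.dist_le_dist_parent_add_one t o j
    omega

theorem sum_accumulate_le_sum_level (hd : IsSwitchedBellmanFord G z o d)
    (hf : IsMonotonicFiltering G o d c a) (t m : ℕ) :
    ∑ i with t ≤ G.dist z i ∧ t ≤ G.dist o i ∧ G.dist o i = m, a t i ≤
      ∑ j with G.dist o j = m, a 0 j := by
  induction t generalizing m with
  | zero => exact sum_le_sum_of_subset (monotone_filter_right _ fun _ _ h => h.2.2)
  | succ t ih =>
    calc _ ≤ #{i | t + 1 ≤ G.dist z i ∧ t + 1 ≤ G.dist o i ∧ G.dist o i = m} +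
          ∑ j with t ≤ G.dist z j ∧ t ≤ G.dist o j ∧ G.dist o j = m + 1, a t j :=
          hf.sum_accumulate_succ_le fun j hj hdj => ?_
      _ ≤ #{j | G.dist o j = m} + ∑ j with G.dist o j = m + 1, a 0 j :=
          add_le_add (card_le_card (monotone_filter_right _ fun _ _ h => h.2.2)) (ih (m + 1))
      _ ≤ _ := hf.card_add_sum_level_succ_le m
    simp only [mem_filter, mem_univ, true_and] at hj ⊢
    have := hf.dist_parent_le_dist_add_one t z j
    have := hf.dist_parent_le_dist_add_one t o j
    have := hd.eq_dist_of_le_dist (t := t + 1) hj.1 hj.2.1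
    have := hd.eq_dist_of_le_dist (t := t) (i := j) (by omega) (by omega)
    omega

theorem sum_accumulate_frontier_le (hG : G.Connected) (hd : IsSwitchedBellmanFord G z o d)
    (hf : IsMonotonicFiltering G o d c a) {t k : ℕ} (htk : t ≤ k) :
    ∑ j with t ≤ G.dist z j ∧ d t j = k, a t j ≤ ∑ j with G.dist o j = 0, a 0 j := by
  rw [← sum_filter_add_sum_filter_not _ (fun j => G.dist o j < t)]
  refine le_trans (add_le_add ?_ ?_) (hf.card_lt_add_sum_level_le k)
  · rw [sum_congr rfl fun j hj => by
      simp only [mem_filter, mem_univ, true_and] at hj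
      exact hf.accumulate_eq_one hG hd hj.2 hj.1.1, ← card_eq_sum_ones]
    refine card_le_card fun j hj => ?_
    simp only [mem_filter, mem_univ, true_and] at hj ⊢
    omega
  · refine le_trans (sum_le_sum_of_subset fun j hj => ?_) (hf.sum_accumulate_le_sum_level hd t k)
    simp only [mem_filter, mem_univ, true_and, not_lt] at hj ⊢
    have := hd.eq_dist_of_le_dist hj.1.1 hj.2
    omega

theorem sum_accumulate_dist_source_le (hG : G.Connected) (hd : IsSwitchedBellmanFord G z o d)
    (hf : IsMonotonicFiltering G o d c a) {t m : ℕ} (hmt : m < t) :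
    ∑ i with G.dist z i = m, a t i ≤
      #{j | m ≤ G.dist z j} + ∑ j with G.dist o j = 0, a 0 j := by
  induction t generalizing m with
  | zero => omega
  | succ t ih =>
    have hparent : ∀ j, G.dist z (c t j) = m → d t j = d (t + 1) (c t j) + 1 →
        d t j = m + 1 :=
      fun j hj hdj => by rw [hdj, hd.eq_dist_of_dist_lt hG (by omega), hj]
    by_cases hinterior : m + 1 < t
    · have hsplit :
          #{j | G.dist z j = m} + #{j | m + 1 ≤ G.dist z j} = #{j | m ≤ G.dist z j} := by
        rw [← card_union_of_disjoint (disjoint_filter.2 fun _ _ h => by omega), ← filter_or]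
        congr 1; ext j; simp only [mem_filter, mem_univ, true_and]; omega
      calc _ ≤ #{j | G.dist z j = m} + ∑ j with G.dist z j = m + 1, a t j :=
            hf.sum_accumulate_succ_le fun j hj hdj => ?_
        _ ≤ #{j | G.dist z j = m} +
              (#{j | m + 1 ≤ G.dist z j} + ∑ j with G.dist o j = 0, a 0 j) :=
            add_le_add_right (ih hinterior) _
        _ = _ := by rw [← add_assoc, hsplit]
      simp only [mem_filter, mem_univ, true_and] at hj ⊢
      have hdj' := hparent j hj hdj
      have := hd.min_dist_le t j
      by_cases hzj : G.dist z j < t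
      · rw [← hd.eq_dist_of_dist_lt hG hzj, hdj']
      · omega
    · calc _ ≤ #{j | G.dist z j = m} + ∑ j with t ≤ G.dist z j ∧ d t j = m + 1, a t j :=
            hf.sum_accumulate_succ_le fun j hj hdj => ?_
        _ ≤ _ := add_le_add (card_le_card (monotone_filter_right _ fun _ _ h => h.ge))
            (hf.sum_accumulate_frontier_le hG hd (by omega))
      simp only [mem_filter, mem_univ, true_and] at hj ⊢
      have hdj' := hparent j hj hdj
      refine ⟨?_, hdj'⟩
      by_contra! hzj
      have := hd.eq_dist_of_dist_lt hG hzj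
      omega

end IsMonotonicFiltering

theorem monotonic_filtering_main_general {V : Type*} [Fintype V] [DecidableEq V]
    (G : SimpleGraph V) [DecidableRel G.Adj] (hconn : G.Connected) (z o : V)
    (hne : ∀ i : V, (G.neighborFinset i).Nonempty)
    (dh : ℕ → V → ℕ) (c : ℕ → V → V) (a : ℕ → V → ℕ)
    (hinit : ∀ i, dh 0 i = G.dist o i)
    (hsrc : ∀ t, 1 ≤ t → dh t z = 0)
    (hupd : ∀ t, 1 ≤ t → ∀ i, i ≠ z →
      dh t i = 1 + (G.neighborFinset i).inf' (hne i) (fun j => dh (t - 1) j))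
    (hc0s : c 0 o = o)
    (hc0 : ∀ i, i ≠ o → G.Adj i (c 0 i) ∧ dh 0 i = 1 + dh 0 (c 0 i))
    (hcs : ∀ t, 1 ≤ t → c t z = z)
    (hc : ∀ t, 1 ≤ t → ∀ i, i ≠ z →
      G.Adj i (c t i) ∧ dh t i = 1 + dh (t - 1) (c t i))
    (ha : ∀ t i, a t i = 1 +
      ∑ j ∈ Finset.univ.filter
          (fun j => c (t - 1) j = i ∧ dh (t - 1) j = dh t i + 1), a (t - 1) j)
    (hlevel : ∀ m : ℕ,
      ∑ j ∈ Finset.univ.filter (fun j => G.dist o j = m), a 0 j ≤ Fintype.card V) :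
    ∀ t, 1 ≤ t → ∀ i,
      (G.dist z i < t → a t i ≤ 2 * Fintype.card V) ∧
      (G.dist o i < t → t ≤ G.dist z i → a t i = 1) ∧
      (t ≤ G.dist z i → t ≤ G.dist o i → a t i ≤ Fintype.card V) := by
  have hd := IsSwitchedBellmanFord.of_neighborFinset_inf' hne hinit hsrc hupd
  have hparent : ∀ t j, c t j = j ∨ G.Adj j (c t j) := by
    rintro (_ | t) j
    · by_cases hj : j = o
      · exact .inl (hj ▸ hc0s)
      · exact .inr (hc0 j hj).1
    · by_cases hj : j = z
      · exact .inl (hj ▸ hcs (t + 1) t.succ_pos)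
      · exact .inr (hc (t + 1) t.succ_pos j hj).1
  have hf : IsMonotonicFiltering G o dh c a :=
    { parent_eq_or_adj := hparent
      dist_parent_zero := fun hj => by rw [← hinit, ← hinit, (hc0 _ hj).2, add_comm]
      accumulate_zero := fun i => by simpa only [hinit] using ha 0 i
      accumulate_succ := fun t i => by simpa only [Nat.add_sub_cancel] using ha (t + 1) i }
  intro t _ i
  refine ⟨fun hzi => ?_, hf.accumulate_eq_one hconn hd, fun hzi hoi => ?_⟩
  · calc a t i ≤ ∑ j with G.dist z j = G.dist z i, a t j :=
          single_le_sum (fun _ _ => Nat.zero_le _) (by simp)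
      _ ≤ #{j | G.dist z i ≤ G.dist z j} + ∑ j with G.dist o j = 0, a 0 j :=
          hf.sum_accumulate_dist_source_le hconn hd hzi
      _ ≤ 2 * Fintype.card V := by
          linarith [card_le_univ {j | G.dist z i ≤ G.dist z j}, hlevel 0]
  · calc a t i
        ≤ ∑ j with t ≤ G.dist z j ∧ t ≤ G.dist o j ∧ G.dist o j = G.dist o i, a t j :=
          single_le_sum (fun _ _ => Nat.zero_le _) (by simp [hzi, hoi])
      _ ≤ ∑ j with G.dist o j = G.dist o i, a 0 j := hf.sum_accumulate_le_sum_level hd t _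
      _ ≤ Fintype.card V := hlevel _

/-- Main theorem: under monotonic filtering after a source switch from `o` to
`z` (`d(z,o) ≥ 3`) in an arbitrary connected graph of `N` nodes with all values
equal to 1, every partial accumulate is bounded at all times `t ≥ 1`:
`a_i(t) ≤ 2N` for `i ∈ I_0(t)`, `a_i(t) = 1` for `i ∈ I_1(t)`, and
`a_i(t) ≤ N` for `i ∈ I_2(t)`. -/
theorem monotonic_filtering_main {V : Type*} [Fintype V] [DecidableEq V]
    (G : SimpleGraph V) [DecidableRel G.Adj] (hconn : G.Connected) (z o : V)
    (hzo : 3 ≤ G.dist z o)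
    (hne : ∀ i : V, (G.neighborFinset i).Nonempty)
    (dh : ℕ → V → ℕ) (c : ℕ → V → V) (a : ℕ → V → ℕ)
    (hinit : ∀ i, dh 0 i = G.dist o i)
    (hsrc : ∀ t, 1 ≤ t → dh t z = 0)
    (hupd : ∀ t, 1 ≤ t → ∀ i, i ≠ z →
      dh t i = 1 + (G.neighborFinset i).inf' (hne i) (fun j => dh (t - 1) j))
    (hc0s : c 0 o = o)
    (hc0 : ∀ i, i ≠ o → G.Adj i (c 0 i) ∧ dh 0 i = 1 + dh 0 (c 0 i))
    (hcs : ∀ t, 1 ≤ t → c t z = z)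
    (hc : ∀ t, 1 ≤ t → ∀ i, i ≠ z →
      G.Adj i (c t i) ∧ dh t i = 1 + dh (t - 1) (c t i))
    (ha : ∀ t i, a t i = 1 +
      ∑ j ∈ Finset.univ.filter
          (fun j => c (t - 1) j = i ∧ dh (t - 1) j = dh t i + 1), a (t - 1) j)
    (hlevel : ∀ m : ℕ,
      ∑ j ∈ Finset.univ.filter (fun j => G.dist o j = m), a 0 j ≤ Fintype.card V) :
    ∀ t, 1 ≤ t → ∀ i,
      (G.dist z i < t → a t i ≤ 2 * Fintype.card V) ∧
      (G.dist o i < t → t ≤ G.dist z i → a t i = 1) ∧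
      (t ≤ G.dist z i → t ≤ G.dist o i → a t i ≤ Fintype.card V) :=
  monotonic_filtering_main_general G hconn z o hne dh c a hinit hsrc hupd hc0s hc0 hcs hc ha hlevel
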